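/- arXiv:2309.14885 — 2 statements merged into one kernel-verified Lean document; each statement's English description precedes it below -/
import Mathlib

section
/- Derivative criterion for the optimal weight: the derivative of the MSPE formula in w, divided by 2(a+1/4+b)², equals (up to positive constant) the cubic g(w) = w³ - 3γ_b w² + (2γ_b² - γ_a² + γ_b + γ_x)w - (γ_b² + (γ_a + γ_b)γ_x), where γ_a = a/(a+1/4+b), γ_b = b/(a+1/4+b), γ_x = μ²/(a+1/4+b); moreover g is a cubic with leading coefficient 1 whose real roots in [0,1] contain the minimizer of the MSPE over [0,1] whenever that minimizer is interior. -/
/-- Derivative criterion for the optimal weight: with `s = a + 1/4 + b`,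
`γ_a = a/s`, `γ_b = b/s`, `γ_x = μ²/s` and the cubic
`g(w) = w³ - 3γ_b w² + (2γ_b² - γ_a² + γ_b + γ_x)w - (γ_b² + (γ_a + γ_b)γ_x)`,
the derivative of the MSPE formula of Theorem 2 equals `κ·g(w)` for a positive
constant `κ`, and any interior minimizer `w₀ ∈ (0,1)` of the MSPE on `[0,1]`
satisfies `g(w₀) = 0`. -/
theorem stmt_15 (a b μ : ℝ) (ha : 0 < a) (hb : 0 < b)
    (s γa γb γx : ℝ) (hs : s = a + 1 / 4 + b) (hγa : γa = a / s) (hγb : γb = b / s)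
    (hγx : γx = μ ^ 2 / s)
    (V MSPE g : ℝ → ℝ)
    (hV : ∀ w, V w = w ^ 2 * (a + 1 / 4) + (1 - w) ^ 2 * b)
    (hMSPE : ∀ w, MSPE w
        = μ ^ 2 * ((4 * a + 4 * b + 1) * w ^ 2 - (8 * a + 8 * b) * w + 4 * a + 4 * b)
          + 3 * V w ^ 2 - (V w - a) ^ 2 + 3 * a ^ 2 - 6 * a ^ 2 * w ^ 2
          - a * w ^ 2 / 2 - 2 * a * b * (1 - w) ^ 2)
    (hg : ∀ w, g w = w ^ 3 - 3 * γb * w ^ 2 + (2 * γb ^ 2 - γa ^ 2 + γb + γx) * w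
        - (γb ^ 2 + (γa + γb) * γx)) :
    (∃ κ : ℝ, 0 < κ ∧ ∀ w, deriv MSPE w = κ * g w) ∧
      ∀ w₀ ∈ Set.Ioo (0 : ℝ) 1,
        (∀ w ∈ Set.Icc (0 : ℝ) 1, MSPE w₀ ≤ MSPE w) → g w₀ = 0 := by

  have hs0 : (0:ℝ) < s := by rw [hs]; linarith
  have hsne : s ≠ 0 := ne_of_gt hs0
  set c4 : ℝ := 1/8 + b + 2*b^2 + a + 4*a*b + 2*a^2 with hc4
  set c3 : ℝ := -2*b - 8*b^2 - 8*a*b with hc3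
  set c2 : ℝ := μ^2 + b + 4*b*μ^2 + 12*b^2 + 4*a*μ^2 + 4*a*b - 4*a^2 with hc2
  set c1 : ℝ := -8*b*μ^2 - 8*b^2 - 8*a*μ^2 with hc1
  set c0 : ℝ := 4*b*μ^2 + 2*b^2 + 4*a*μ^2 + 2*a^2 with hc0
  have hMp : MSPE = fun w : ℝ => c4*w^4 + c3*w^3 + c2*w^2 + c1*w + c0 := by
    funext w
    rw [hMSPE w, hV w, hc4, hc3, hc2, hc1, hc0]
    ring
  have hder : ∀ w : ℝ, HasDerivAt MSPE (c4*(4*w^3) + c3*(3*w^2) + c2*(2*w) + c1) w := by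
    intro w
    rw [hMp]
    have h4 : HasDerivAt (fun x : ℝ => c4 * x^4) (c4 * (4*w^3)) w := by
      simpa using (hasDerivAt_pow 4 w).const_mul c4
    have h3 : HasDerivAt (fun x : ℝ => c3 * x^3) (c3 * (3*w^2)) w := by
      simpa using (hasDerivAt_pow 3 w).const_mul c3
    have h2 : HasDerivAt (fun x : ℝ => c2 * x^2) (c2 * (2*w)) w := by
      simpa using (hasDerivAt_pow 2 w).const_mul c2
    have h1 : HasDerivAt (fun x : ℝ => c1 * x) c1 w := by
      simpa using (hasDerivAt_id w).const_mul c1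
    have h0 : HasDerivAt (fun _ : ℝ => c0) 0 w := hasDerivAt_const w c0
    rw [show c4*(4*w^3) + c3*(3*w^2) + c2*(2*w) + c1 = c4*(4*w^3) + c3*(3*w^2) + c2*(2*w) + c1 + 0 by ring]
    exact (((h4.add h3).add h2).add h1).add h0
  have hkey : ∀ w : ℝ, c4*(4*w^3) + c3*(3*w^2) + c2*(2*w) + c1 = (8*s^2) * g w := by
    intro w
    rw [hg w, hγa, hγb, hγx, hc4, hc3, hc2, hc1]
    subst hs
    field_simp
    ring
  have hderiv : ∀ w : ℝ, deriv MSPE w = (8*s^2) * g w := by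
    intro w
    rw [(hder w).deriv, hkey w]
  constructor
  · exact ⟨8*s^2, by positivity, hderiv⟩
  · rintro w₀ ⟨h0, h1⟩ hmin
    have hloc : IsLocalMin MSPE w₀ := by
      have hnb : Set.Icc (0:ℝ) 1 ∈ nhds w₀ :=
        Filter.mem_of_superset (Ioo_mem_nhds h0 h1) Set.Ioo_subset_Icc_self
      exact Filter.eventually_of_mem hnb hmin
    have hz : deriv MSPE w₀ = 0 := hloc.deriv_eq_zero
    rw [hderiv w₀] at hz
    have : (8*s^2) ≠ 0 := by positivity
    exact (mul_eq_zero.mp hz).resolve_left this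
end

section
/- With γ = (1/4)/(a+1/4+b) and Z, U as in the measurement error model, the predictor λ^(P) = ((1-γ)Z + γU)² - γ(b - a) is unbiased for λ = θ²: E[λ^(P) - θ²] = 0. -/
/-!
Write `θ = μ + v` and the predictor as `μ + W` with `W = (1 - γ) v + (1 - γ) e + γ Δ`. Both
fluctuations are centred, so the second moments are `μ² + Var v = μ² + a` and
`μ² + Var W = μ² + (1 - γ)² (a + 1/4) + γ² b`, the latter by independence. With
`1 - γ = (a + b) / (a + 1/4 + b)` the difference simplifies to `γ (b - a)`.
-/

open MeasureTheory ProbabilityTheory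

section

variable {Ω : Type*} [MeasurableSpace Ω] {P : Measure Ω}

lemma hasLaw_of_map_eq {𝓧 : Type*} [MeasurableSpace 𝓧] {X : Ω → 𝓧} {ν : Measure 𝓧} [NeZero ν]
    (h : P.map X = ν) : HasLaw X ν P :=
  ⟨aemeasurable_of_map_neZero (h ▸ inferInstance), h⟩

variable {ι : Type*} [Fintype ι] {X : ι → Ω → ℝ}

lemma variance_sum_const_mul (hX : ∀ i, MemLp (X i) 2 P)
    (hindep : Pairwise fun i j ↦ X i ⟂ᵢ[P] X j) (c : ι → ℝ) :
    Var[fun ω ↦ ∑ i, c i * X i ω; P] = ∑ i, c i ^ 2 * Var[X i; P] := by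
  have h := IndepFun.variance_sum (s := Finset.univ) (X := fun i ↦ c i • X i)
    (fun i _ ↦ (hX i).const_smul (c i))
    (fun i _ j _ hij ↦ (hindep hij).comp (measurable_const_mul (c i)) (measurable_const_mul (c j)))
  simp only [variance_smul] at h
  rw [← h]
  congr 1 with ω
  simp

variable [IsProbabilityMeasure P]

lemma integral_sub_const_sub {F G : Ω → ℝ} (hF : Integrable F P) (hG : Integrable G P) (c : ℝ) :
    ∫ ω, (F ω - c - G ω) ∂P = ∫ ω, F ω ∂P - ∫ ω, G ω ∂P - c := by
  rw [integral_sub (f := fun ω ↦ F ω - c) (hF.sub (integrable_const c)) hG, integral_sub hF (integrable_const c)]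
  simp only [integral_const, probReal_univ, one_smul]
  ring

lemma integral_const_add_sq_of_integral_eq_zero {X : Ω → ℝ} (hX : MemLp X 2 P) (h0 : P[X] = 0)
    (m : ℝ) : ∫ ω, (m + X ω) ^ 2 ∂P = m ^ 2 + Var[X; P] := by
  have hmean : P[fun ω ↦ m + X ω] = m := by
    rw [integral_add (integrable_const m) (hX.integrable one_le_two), h0]
    simp
  have h := variance_eq_sub ((memLp_const m).add hX)
  rw [show (fun _ ↦ m) + X = fun ω ↦ m + X ω from rfl, variance_const_add hX.1, hmean] at h
  simp only [Pi.pow_apply] at h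
  linarith

lemma integral_const_add_sum_const_mul_sq (hX : ∀ i, MemLp (X i) 2 P) (h0 : ∀ i, P[X i] = 0)
    (hindep : Pairwise fun i j ↦ X i ⟂ᵢ[P] X j) (m : ℝ) (c : ι → ℝ) :
    ∫ ω, (m + ∑ i, c i * X i ω) ^ 2 ∂P = m ^ 2 + ∑ i, c i ^ 2 * Var[X i; P] := by
  have hL2 : MemLp (fun ω ↦ ∑ i, c i * X i ω) 2 P :=
    memLp_finsetSum _ fun i _ ↦ (hX i).const_mul (c i)
  have hmean : P[fun ω ↦ ∑ i, c i * X i ω] = 0 := by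
    rw [integral_finsetSum _ fun i _ ↦ ((hX i).integrable one_le_two).const_mul (c i)]
    simp [integral_const_mul, h0]
  rw [integral_const_add_sq_of_integral_eq_zero hL2 hmean, variance_sum_const_mul hX hindep]

end

/-- Unbiasedness of the proposed predictor: in the model `θ = μ + v`, `Z = θ + e`,
`U = μ + Δ` with `v ~ N(0,a)`, `e ~ N(0,1/4)`, `Δ ~ N(0,b)` mutually independent and
`γ = (1/4)/(a + 1/4 + b)`, one has `E[((1-γ)Z + γU)²] - E[θ²] = γ(b-a)` and hence
`E[((1-γ)Z + γU)² - γ(b-a) - θ²] = 0`. -/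
theorem stmt_18 {Ω : Type*} [MeasurableSpace Ω] (P : Measure Ω) [IsProbabilityMeasure P]
    (v e Δ : Ω → ℝ) (μ a b : ℝ) (ha : 0 ≤ a) (hb : 0 ≤ b)
    (hv : P.map v = gaussianReal 0 a.toNNReal)
    (he : P.map e = gaussianReal 0 (Real.toNNReal (1 / 4)))
    (hΔ : P.map Δ = gaussianReal 0 b.toNNReal)
    (hindep : iIndepFun ![v, e, Δ] P)
    (γ : ℝ) (hγ : γ = (1 / 4) / (a + 1 / 4 + b)) :
    ((∫ ω, ((1 - γ) * ((μ + v ω) + e ω) + γ * (μ + Δ ω)) ^ 2 ∂P)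
        - ∫ ω, (μ + v ω) ^ 2 ∂P = γ * (b - a)) ∧
      ∫ ω, (((1 - γ) * ((μ + v ω) + e ω) + γ * (μ + Δ ω)) ^ 2 - γ * (b - a)
          - (μ + v ω) ^ 2) ∂P = 0 := by
  have hlaw : ∀ i, HasLaw (![v, e, Δ] i)
      (gaussianReal 0 (![a.toNNReal, Real.toNNReal (1 / 4), b.toNNReal] i)) P := by
    intro i
    fin_cases i
    exacts [hasLaw_of_map_eq hv, hasLaw_of_map_eq he, hasLaw_of_map_eq hΔ]
  have hL2 i : MemLp (![v, e, Δ] i) 2 P := (hlaw i).hasGaussianLaw.memLp_two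
  have hmean i : P[![v, e, Δ] i] = 0 := by rw [(hlaw i).integral_eq, integral_id_gaussianReal]
  have hvar i : Var[![v, e, Δ] i; P] = ![a.toNNReal, Real.toNNReal (1 / 4), b.toNNReal] i := by
    rw [(hlaw i).variance_eq, variance_id_gaussianReal]
  have hpred : ∫ ω, ((1 - γ) * ((μ + v ω) + e ω) + γ * (μ + Δ ω)) ^ 2 ∂P
      = μ ^ 2 + ((1 - γ) ^ 2 * a + (1 - γ) ^ 2 * (1 / 4) + γ ^ 2 * b) := calc
    _ = ∫ ω, (μ + ∑ i, ![1 - γ, 1 - γ, γ] i * ![v, e, Δ] i ω) ^ 2 ∂P := by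
      congr 1 with ω
      simp [Fin.sum_univ_three]
      ring
    _ = _ := by
      rw [integral_const_add_sum_const_mul_sq hL2 hmean fun i j hij ↦ hindep.indepFun hij]
      simp only [Fin.sum_univ_three, hvar]
      simp [ha, hb]
  have hθ : ∫ ω, (μ + v ω) ^ 2 ∂P = μ ^ 2 + a := by
    refine (integral_const_add_sq_of_integral_eq_zero (hL2 0) (hmean 0) μ).trans ?_
    rw [hvar 0]
    simp [ha]
  have hdiff : ∫ ω, ((1 - γ) * ((μ + v ω) + e ω) + γ * (μ + Δ ω)) ^ 2 ∂P
      - ∫ ω, (μ + v ω) ^ 2 ∂P = γ * (b - a) := by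
    have : 0 < a + 1 / 4 + b := by positivity
    rw [hpred, hθ, hγ]
    field_simp
    ring
  have hpred_L2 : MemLp (fun ω ↦ (1 - γ) * ((μ + v ω) + e ω) + γ * (μ + Δ ω)) 2 P :=
    ((((memLp_const μ).add (hL2 0)).add (hL2 1)).const_mul (1 - γ)).add
      (((memLp_const μ).add (hL2 2)).const_mul γ)
  have hθ_L2 : MemLp (fun ω ↦ μ + v ω) 2 P := (memLp_const μ).add (hL2 0)
  refine ⟨hdiff, ?_⟩
  rw [integral_sub_const_sub hpred_L2.integrable_sq hθ_L2.integrable_sq, hdiff, sub_self]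
end
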